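/- arXiv:1903.03755 — 3 statements merged into one kernel-verified Lean document; each statement's English description precedes it below -/
import Mathlib

section
/- Let D ≥ 2 and n = D^m for some natural number m ≥ 1. Let P be a PMF on n symbols whose entries are sorted nonincreasingly (P i ≥ P j whenever i ≤ j). Then the minimum expected length of P equals the minimum expected length of the uniform distribution, i.e. L_D(P) = L_D(U_n), if and only if the sum of the lowest D probabilities of P is greater than or equal to its highest probability, i.e. ∑_{i=n−D}^{n−1} P i ≥ P 0. -/
/-- `P` is a probability mass function on `n` symbols: all entries positive, summing to 1. -/
def IsPMF {n : ℕ} (P : Fin n → ℝ) : Prop :=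
  (∀ i, 0 < P i) ∧ ∑ i, P i = 1

/-- `c` is a `D`-ary prefix code on `n` symbols: injective, and no codeword is a
prefix of another. -/
def IsPrefixCode {D n : ℕ} (c : Fin n → List (Fin D)) : Prop :=
  Function.Injective c ∧ ∀ i j : Fin n, i ≠ j → ¬ (c i <+: c j)

/-- Expected length of the code `c` under the PMF `P`. -/
noncomputable def expLen {D n : ℕ} (P : Fin n → ℝ) (c : Fin n → List (Fin D)) : ℝ :=
  ∑ i, P i * ((c i).length : ℝ)

/-- Minimum expected length: infimum of expected lengths over all `D`-ary prefix codes. -/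
noncomputable def minExpLen (D : ℕ) {n : ℕ} (P : Fin n → ℝ) : ℝ :=
  sInf {x : ℝ | ∃ c : Fin n → List (Fin D), IsPrefixCode c ∧ x = expLen P c}

/-- The uniform distribution on `n` symbols. -/
noncomputable def unif (n : ℕ) : Fin n → ℝ := fun _ => 1 / n

open Finset


def extFun {D L l : ℕ} (hl : l ≤ L) (a : Fin l → Fin D) (g : Fin (L - l) → Fin D) :
    Fin L → Fin D :=
  fun k => if h : (k : ℕ) < l then a ⟨k, h⟩ else g ⟨(k : ℕ) - l, by omega⟩

lemma card_ext {D L l : ℕ} (hl : l ≤ L) (a : Fin l → Fin D) :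
    ((univ : Finset (Fin L → Fin D)).filter
      (fun w => ∀ k : Fin l, w ⟨k, lt_of_lt_of_le k.2 hl⟩ = a k)).card = D ^ (L - l) := by
  classical
  have hinj : Function.Injective (extFun hl a) := by
    intro g g' h
    funext j
    have hj : l + (j : ℕ) < L := by omega
    have := congrFun h ⟨l + j, hj⟩
    simp only [extFun, dif_neg (by omega : ¬ (l + (j:ℕ) < l))] at this
    simpa [Fin.ext_iff] using this
  have himg : (univ : Finset (Fin L → Fin D)).filter
      (fun w => ∀ k : Fin l, w ⟨k, lt_of_lt_of_le k.2 hl⟩ = a k) =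
      Finset.image (extFun hl a) univ := by
    ext w
    simp only [mem_filter, mem_univ, true_and, Finset.mem_image]
    constructor
    · intro hw
      refine ⟨fun j => w ⟨l + j, by omega⟩, ?_⟩
      funext k
      by_cases h : (k : ℕ) < l
      · simpa [extFun, dif_pos h] using (hw ⟨k, h⟩).symm
      · simp only [extFun, dif_neg h]
        congr 1
        ext
        simp
        omega
    · rintro ⟨g, rfl⟩
      intro k
      simp [extFun, k.2]
  rw [himg, Finset.card_image_of_injective _ hinj]
  simp [Fintype.card_fun]

lemma kraft_nat {D n : ℕ} (c : Fin n → List (Fin D)) (hc : IsPrefixCode c)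
    (L : ℕ) (hL : ∀ i, (c i).length ≤ L) :
    ∑ i, D ^ (L - (c i).length) ≤ D ^ L := by
  classical
  have hcard : ∀ i, ((univ : Finset (Fin L → Fin D)).filter
      (fun w => c i <+: List.ofFn w)).card = D ^ (L - (c i).length) := by
    intro i
    have heq : ((univ : Finset (Fin L → Fin D)).filter (fun w => c i <+: List.ofFn w)) =
        ((univ : Finset (Fin L → Fin D)).filter
          (fun w => ∀ k : Fin (c i).length,
            w ⟨k, lt_of_lt_of_le k.2 (hL i)⟩ = (c i).get k)) := by
      ext w
      simp only [mem_filter, mem_univ, true_and]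
      constructor
      · intro hpre k
        have h1 : (k : ℕ) < (List.ofFn w).length := by
          rw [List.length_ofFn]; exact lt_of_lt_of_le k.2 (hL i)
        have := hpre.getElem k.2
        rw [List.getElem_ofFn] at this
        simp [List.get_eq_getElem, this]
      · intro hk
        rw [List.prefix_iff_eq_take]
        apply List.ext_getElem
        · have := hL i
          simp [List.length_take]
          omega
        · intro j h1 h2
          rw [List.getElem_take, List.getElem_ofFn]
          have := hk ⟨j, h1⟩
          simp [List.get_eq_getElem] at this
          exact this.symm
    rw [heq, card_ext (hL i)]
  have hdisj : ∀ i ∈ (univ : Finset (Fin n)), ∀ j ∈ univ, i ≠ j →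
      Disjoint ((univ : Finset (Fin L → Fin D)).filter (fun w => c i <+: List.ofFn w))
        ((univ : Finset (Fin L → Fin D)).filter (fun w => c j <+: List.ofFn w)) := by
    intro i _ j _ hij
    rw [Finset.disjoint_left]
    intro w hwi hwj
    simp only [mem_filter] at hwi hwj
    rcases List.prefix_or_prefix_of_prefix hwi.2 hwj.2 with h | h
    · exact hc.2 i j hij h
    · exact hc.2 j i hij.symm h
  calc ∑ i, D ^ (L - (c i).length)
      = ∑ i, ((univ : Finset (Fin L → Fin D)).filter
          (fun w => c i <+: List.ofFn w)).card := by simp [hcard]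
    _ = (univ.biUnion (fun i => (univ : Finset (Fin L → Fin D)).filter
          (fun w => c i <+: List.ofFn w))).card := (Finset.card_biUnion hdisj).symm
    _ ≤ (univ : Finset (Fin L → Fin D)).card := Finset.card_le_card (subset_univ _)
    _ = D ^ L := by simp [Fintype.card_fun]

lemma card_filter_ge (n t : ℕ) :
    ((Finset.univ : Finset (Fin n)).filter (fun i : Fin n => t ≤ (i:ℕ))).card = n - t := by
  rw [Finset.card_filter]
  rw [Fin.sum_univ_eq_sum_range (fun i => if t ≤ i then (1:ℕ) else 0)]
  rw [← Finset.sum_filter]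
  have : ((Finset.range n).filter (fun i => t ≤ i)) = Finset.Ico t n := by
    ext x; simp [Finset.mem_filter]; omega
  simp [this]

lemma card_filter_le (n t : ℕ) (h : t < n) :
    ((Finset.univ : Finset (Fin n)).filter (fun i : Fin n => (i:ℕ) ≤ t)).card = t + 1 := by
  rw [Finset.card_filter]
  rw [Fin.sum_univ_eq_sum_range (fun i => if i ≤ t then (1:ℕ) else 0)]
  rw [← Finset.sum_filter]
  have : ((Finset.range n).filter (fun i => i ≤ t)) = Finset.range (t+1) := by
    ext x; simp [Finset.mem_filter]; omega
  simp [this]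

/-- Key combinatorial lemma. -/
lemma key_lemma (D m : ℕ) (hD : 2 ≤ D) (hm : 1 ≤ m) (P : Fin (D ^ m) → ℝ)
    (hpos : ∀ i, 0 < P i) (hsorted : Antitone P)
    (hcond : P ⟨0, pow_pos (Nat.lt_of_lt_of_le (by decide : 0 < 2) hD) m⟩ ≤
      ∑ i ∈ Finset.univ.filter (fun i : Fin (D ^ m) => D ^ m - D ≤ (i : ℕ)), P i)
    (N : ℕ) : ∀ (c : Fin (D ^ m) → ℤ), Antitone c →
      (∑ i, (c i).toNat) = N →
      (∑ i, (D:ℝ) ^ (c i) ≤ (D:ℝ) ^ (m:ℤ)) → ∑ i, P i * (c i : ℝ) ≤ 0 := by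
  have hn : 0 < D ^ m := pow_pos (by omega) m
  have hDn : D ≤ D ^ m := Nat.le_self_pow (by omega) D
  have hn2 : 2 ≤ D ^ m := le_trans hD hDn
  have hD0 : (0:ℝ) < D := by positivity
  have hD1 : (1:ℝ) < D := by exact_mod_cast by omega
  set i0 : Fin (D ^ m) := ⟨0, hn⟩ with hi0
  have hi0v : (i0 : ℕ) = 0 := rfl
  set t : ℕ := D ^ m - D with htdef
  induction N using Nat.strong_induction_on with
  | _ N ih =>
    intro c hanti hmeas hkraft
    by_cases hc0 : c i0 ≤ 0
    · -- base case: all entries ≤ 0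
      have hall : ∀ i, c i ≤ 0 := fun i => le_trans (hanti (Fin.mk_le_mk.mpr (Nat.zero_le _))) hc0
      apply Finset.sum_nonpos
      intro i _
      have : (c i : ℝ) ≤ 0 := by exact_mod_cast hall i
      exact mul_nonpos_of_nonneg_of_nonpos (hpos i).le this
    · push_neg at hc0
      have hc0' : 1 ≤ c i0 := hc0
      -- Step 1: all entries with index ≥ t are ≤ -1
      have hT : ∀ i : Fin (D ^ m), t ≤ (i:ℕ) → c i ≤ -1 := by
        intro i hi
        by_contra hci
        push_neg at hci
        have hci0 : 0 ≤ c i := by omega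
        -- every index ≤ t has c ≥ 0
        have hge : ∀ j : Fin (D ^ m), (j:ℕ) ≤ t → 0 ≤ c j := by
          intro j hj
          exact le_trans hci0 (hanti (show j ≤ i by rw [Fin.le_def]; omega))
        -- lower bound function
        set f : Fin (D ^ m) → ℝ := fun j =>
          (if (j:ℕ) ≤ t then (1:ℝ) else 0) + (if (j:ℕ) = 0 then (D:ℝ) - 1 else 0) with hf
        have hlt : ∑ j, f j < ∑ j, (D:ℝ) ^ (c j) := by
          apply Finset.sum_lt_sum
          · intro j _
            rcases Nat.eq_zero_or_pos (j:ℕ) with hj0 | hjpos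
            · have hji : j = i0 := by ext; simpa using hj0
              have h1 : ((D:ℝ)) ≤ (D:ℝ) ^ (c j) := by
                have : ((D:ℝ)) ^ (1:ℤ) ≤ (D:ℝ) ^ (c j) :=
                  zpow_le_zpow_right₀ hD1.le (by rw [hji]; exact hc0')
                simpa using this
              have hfj : f j = 1 + ((D:ℝ) - 1) := by simp [hf, hj0]
              rw [hfj]
              linarith
            · have hj0' : ¬ ((j:ℕ) = 0) := by omega
              by_cases hjt : (j:ℕ) ≤ t
              · have h1 : (1:ℝ) ≤ (D:ℝ) ^ (c j) := one_le_zpow₀ hD1.le (hge j hjt)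
                simp only [hf, if_pos hjt, if_neg hj0']
                linarith
              · have h1 : (0:ℝ) < (D:ℝ) ^ (c j) := zpow_pos hD0 _
                simp only [hf, if_neg hjt, if_neg hj0']
                linarith
          · refine ⟨⟨D ^ m - 1, by omega⟩, Finset.mem_univ _, ?_⟩
            have h1 : (0:ℝ) < (D:ℝ) ^ (c ⟨D ^ m - 1, by omega⟩) := zpow_pos hD0 _
            have h2 : ¬ ((D ^ m - 1 : ℕ) ≤ t) := by omega
            simp only [hf, if_neg h2, if_neg (by omega : ¬ ((D ^ m - 1 : ℕ) = 0))]
            linarith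
        have hsumf : ∑ j, f j = ((D ^ m : ℕ) : ℝ) := by
          rw [hf, Finset.sum_add_distrib]
          have e1 : ∑ j : Fin (D ^ m), (if (j:ℕ) ≤ t then (1:ℝ) else 0) = (t + 1 : ℕ) := by
            rw [← Finset.sum_filter, Finset.sum_const, card_filter_le (D ^ m) t (by omega)]
            simp
          have e2 : ∑ j : Fin (D ^ m), (if (j:ℕ) = 0 then (D:ℝ) - 1 else 0) = (D:ℝ) - 1 := by
            have : ∀ j : Fin (D ^ m), ((j:ℕ) = 0) ↔ (j = i0) := by
              intro j; constructor
              · intro h; ext; simpa using h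
              · intro h; rw [h]
            simp_rw [this]
            rw [Finset.sum_ite_eq' Finset.univ i0 (fun _ => (D:ℝ) - 1)]
            simp
          rw [e1, e2]
          have htD : t + D = D ^ m := by omega
          rw [← htD]
          push_cast [Nat.cast_sub (show (1:ℕ) ≤ D by omega)]
          ring
        have hkn : ((D:ℝ)) ^ (m:ℤ) = ((D ^ m : ℕ) : ℝ) := by
          push_cast [zpow_natCast]
          ring
        rw [hsumf, ← hkn] at hlt
        linarith
      -- t ≥ 1
      have ht1 : 1 ≤ t := by
        rcases Nat.eq_zero_or_pos t with h0 | h1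
        · exfalso
          have hle : t ≤ (i0 : ℕ) := by omega
          have := hT i0 hle
          omega
        · exact h1
      -- the exchanged sequence
      set c' : Fin (D ^ m) → ℤ := fun i =>
        if (i:ℕ) = 0 then c i - 1 else if t ≤ (i:ℕ) then c i + 1 else c i with hc'
      -- measure decreases
      have hN1 : 1 ≤ N := by
        have : 1 ≤ (c i0).toNat := by omega
        calc 1 ≤ (c i0).toNat := this
          _ ≤ ∑ i, (c i).toNat := Finset.single_le_sum (f := fun i => (c i).toNat)
                (fun i _ => Nat.zero_le _) (Finset.mem_univ i0)
          _ = N := hmeas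
      have hmeas' : ∑ i, (c' i).toNat = N - 1 := by
        have hpt : ∀ i : Fin (D ^ m), (c i).toNat = (c' i).toNat + (if i = i0 then 1 else 0) := by
          intro i
          rcases Nat.eq_zero_or_pos (i:ℕ) with h0 | hp
          · have hii : i = i0 := by ext; simpa using h0
            subst hii
            simp [hc', h0]
            omega
          · have hne : i ≠ i0 := by intro h; rw [h] at hp; simp [hi0] at hp
            simp only [hc', if_neg (by omega : ¬ ((i:ℕ) = 0)), if_neg hne]
            by_cases hti : t ≤ (i:ℕ)
            · have := hT i hti
              simp only [if_pos hti]
              omega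
            · simp only [if_neg hti]
              omega
        have : ∑ i, (c i).toNat = (∑ i, (c' i).toNat) + 1 := by
          rw [Finset.sum_congr rfl (fun i _ => hpt i), Finset.sum_add_distrib,
            Finset.sum_ite_eq' Finset.univ i0 (fun _ => 1)]
          simp
        omega
      -- Kraft is preserved
      have hkraft' : ∑ i, (D:ℝ) ^ (c' i) ≤ (D:ℝ) ^ (m:ℤ) := by
        have hdiff : ∑ i, ((D:ℝ) ^ (c' i) - (D:ℝ) ^ (c i)) ≤ 0 := by
          have hptle : ∀ i : Fin (D ^ m), (D:ℝ) ^ (c' i) - (D:ℝ) ^ (c i) ≤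
              (if t ≤ (i:ℕ) then (D:ℝ) ^ (-1:ℤ) * ((D:ℝ) - 1) else 0)
              - (if (i:ℕ) = 0 then (D:ℝ) - 1 else 0) := by
            intro i
            rcases Nat.eq_zero_or_pos (i:ℕ) with h0 | hp
            · simp only [hc', if_pos h0, if_neg (by omega : ¬ t ≤ (i:ℕ))]
              have hii : i = i0 := by ext; simpa using h0
              have h1 : ((D:ℝ)) ^ (c i - 1) - (D:ℝ) ^ (c i) = -(((D:ℝ)) ^ (c i - 1) * ((D:ℝ) - 1)) := by
                have : ((D:ℝ)) ^ (c i) = (D:ℝ) ^ (c i - 1) * (D:ℝ) := by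
                  rw [← zpow_add_one₀ (by positivity : (D:ℝ) ≠ 0)]; ring_nf
                rw [this]; ring
              have h2 : (1:ℝ) ≤ (D:ℝ) ^ (c i - 1) := by
                apply one_le_zpow₀ hD1.le
                rw [hii]; omega
              rw [h1]
              have : (0:ℝ) ≤ (D:ℝ) - 1 := by linarith
              nlinarith
            · simp only [hc', if_neg (by omega : ¬ ((i:ℕ) = 0))]
              by_cases hti : t ≤ (i:ℕ)
              · simp only [if_pos hti]
                have h1 : ((D:ℝ)) ^ (c i + 1) - (D:ℝ) ^ (c i) = ((D:ℝ)) ^ (c i) * ((D:ℝ) - 1) := by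
                  rw [zpow_add_one₀ (by positivity : (D:ℝ) ≠ 0)]; ring
                have h2 : ((D:ℝ)) ^ (c i) ≤ (D:ℝ) ^ (-1:ℤ) :=
                  zpow_le_zpow_right₀ hD1.le (hT i hti)
                rw [h1]
                have : (0:ℝ) ≤ (D:ℝ) - 1 := by linarith
                nlinarith
              · simp only [if_neg hti]
                simp
          calc ∑ i, ((D:ℝ) ^ (c' i) - (D:ℝ) ^ (c i))
              ≤ ∑ i : Fin (D ^ m), ((if t ≤ (i:ℕ) then (D:ℝ) ^ (-1:ℤ) * ((D:ℝ) - 1) else 0)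
                - (if (i:ℕ) = 0 then (D:ℝ) - 1 else 0)) :=
                Finset.sum_le_sum (fun i _ => hptle i)
            _ = 0 := by
                rw [Finset.sum_sub_distrib]
                have e1 : ∑ i : Fin (D ^ m), (if t ≤ (i:ℕ) then (D:ℝ) ^ (-1:ℤ) * ((D:ℝ) - 1) else 0)
                    = (D:ℝ) * ((D:ℝ) ^ (-1:ℤ) * ((D:ℝ) - 1)) := by
                  rw [← Finset.sum_filter, Finset.sum_const, card_filter_ge (D ^ m) t]
                  have : D ^ m - t = D := by omega
                  rw [this]
                  simp [nsmul_eq_mul]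
                have e2 : ∑ i : Fin (D ^ m), (if (i:ℕ) = 0 then (D:ℝ) - 1 else 0) = (D:ℝ) - 1 := by
                  have heq : ∀ j : Fin (D ^ m), ((j:ℕ) = 0) ↔ (j = i0) := by
                    intro j; constructor
                    · intro h; ext; simpa using h
                    · intro h; rw [h]
                  simp_rw [heq]
                  rw [Finset.sum_ite_eq' Finset.univ i0 (fun _ => (D:ℝ) - 1)]
                  simp
                rw [e1, e2]
                have : (D:ℝ) * ((D:ℝ) ^ (-1:ℤ)) = 1 := by
                  rw [zpow_neg_one]
                  field_simp
                nlinarith [this]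
        have := Finset.sum_sub_distrib (s := (Finset.univ : Finset (Fin (D ^ m))))
          (f := fun i => (D:ℝ) ^ (c' i)) (g := fun i => (D:ℝ) ^ (c i))
        rw [this] at hdiff
        linarith
      -- cost increases
      have hcost : ∑ i, P i * (c i : ℝ) ≤ ∑ i, P i * (c' i : ℝ) := by
        have hpt : ∀ i : Fin (D ^ m), P i * (c' i : ℝ) - P i * (c i : ℝ) =
            (if t ≤ (i:ℕ) then P i else 0) - (if i = i0 then P i else 0) := by
          intro i
          rcases Nat.eq_zero_or_pos (i:ℕ) with h0 | hp
          · have hii : i = i0 := by ext; simpa using h0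
            simp only [hc', if_pos h0, if_neg (by omega : ¬ t ≤ (i:ℕ)), if_pos hii]
            push_cast
            ring
          · have hne : i ≠ i0 := by intro h; rw [h] at hp; simp [hi0] at hp
            simp only [hc', if_neg (by omega : ¬ ((i:ℕ) = 0)), if_neg hne]
            by_cases hti : t ≤ (i:ℕ)
            · simp only [if_pos hti]; push_cast; ring
            · simp only [if_neg hti]; push_cast; ring
        have hsum : ∑ i, (P i * (c' i : ℝ) - P i * (c i : ℝ)) =
            (∑ i ∈ Finset.univ.filter (fun i : Fin (D ^ m) => t ≤ (i:ℕ)), P i) - P i0 := by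
          rw [Finset.sum_congr rfl (fun i _ => hpt i), Finset.sum_sub_distrib,
            ← Finset.sum_filter, Finset.sum_ite_eq' Finset.univ i0 P]
          simp
        have h2 : (0:ℝ) ≤ ∑ i, (P i * (c' i : ℝ) - P i * (c i : ℝ)) := by
          rw [hsum]
          have : P i0 ≤ ∑ i ∈ Finset.univ.filter (fun i : Fin (D ^ m) => t ≤ (i:ℕ)), P i := hcond
          linarith
        have := Finset.sum_sub_distrib (s := (Finset.univ : Finset (Fin (D ^ m))))
          (f := fun i => P i * (c' i : ℝ)) (g := fun i => P i * (c i : ℝ))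
        rw [this] at h2
        linarith
      -- re-sort c'
      set σ : Equiv.Perm (Fin (D ^ m)) := Tuple.sort (fun i => - c' i) with hσ
      set c'' : Fin (D ^ m) → ℤ := fun i => c' (σ i) with hc''
      have hanti'' : Antitone c'' := by
        intro a b hab
        have h := Tuple.monotone_sort (fun i => - c' i) hab
        simp only [Function.comp_apply] at h
        have h2 : - c' (σ a) ≤ - c' (σ b) := by rw [hσ]; exact h
        simp only [hc'']
        omega
      have hmeas'' : ∑ i, (c'' i).toNat = N - 1 := by
        rw [hc'']
        rw [← hmeas']
        exact Equiv.sum_comp σ (fun i => (c' i).toNat)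
      have hkraft'' : ∑ i, (D:ℝ) ^ (c'' i) ≤ (D:ℝ) ^ (m:ℤ) := by
        rw [hc'']
        rw [Equiv.sum_comp σ (fun i => (D:ℝ) ^ (c' i))]
        exact hkraft'
      have hIH : ∑ i, P i * (c'' i : ℝ) ≤ 0 :=
        ih (N-1) (by omega) c'' hanti'' hmeas'' hkraft''
      -- rearrangement: ∑ P c' ≤ ∑ P c''
      have hrearr : ∑ i, P i * (c' i : ℝ) ≤ ∑ i, P i * (c'' i : ℝ) := by
        have hmono : Monovary P (fun i => (c'' i : ℝ)) := by
          apply Antitone.monovary hsorted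
          intro a b hab
          dsimp only
          exact_mod_cast hanti'' hab
        have := hmono.sum_smul_comp_perm_le_sum_smul (σ := σ⁻¹)
        simp only [smul_eq_mul] at this
        calc ∑ i, P i * (c' i : ℝ) = ∑ i, P i * ((c'' (σ⁻¹ i) : ℝ)) := by
              apply Finset.sum_congr rfl
              intro i _
              simp [hc'']
          _ ≤ ∑ i, P i * (c'' i : ℝ) := this
      linarith


/-- MSB-first base-`D` representation of `v` with `m` digits. -/
def wordM (D m : ℕ) (v : Fin (D ^ m)) : List (Fin D) :=
  List.ofFn (fun k : Fin m => finFunctionFinEquiv.symm v k.rev)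

lemma wordM_length {D m : ℕ} (v : Fin (D ^ m)) : (wordM D m v).length = m := by
  simp [wordM]

lemma wordM_inj {D m : ℕ} : Function.Injective (wordM D m) := by
  intro v w h
  rw [wordM, wordM, List.ofFn_inj] at h
  have he : finFunctionFinEquiv.symm v = finFunctionFinEquiv.symm w := by
    funext k
    have := congrFun h k.rev
    simpa [Fin.rev_rev] using this
  exact finFunctionFinEquiv.symm.injective he

lemma wordM_getElem {D m : ℕ} (v : Fin (D ^ m)) (k : ℕ) (hk : k < m) :
    ((wordM D m v)[k]'(by rw [wordM_length]; exact hk) : Fin D).val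
      = (v : ℕ) / D ^ (m - (k + 1)) % D := by
  simp only [wordM, List.getElem_ofFn]
  rw [finFunctionFinEquiv_symm_apply_val]
  simp [Fin.val_rev]

/-- a number `D ≤ v < D^m` has a nonzero digit in position `1 ≤ j < m`. -/
lemma exists_digit (D m : ℕ) (hD : 2 ≤ D) (v : ℕ) (hv1 : D ≤ v) (hv2 : v < D ^ m) :
    ∃ j, 1 ≤ j ∧ j < m ∧ v / D ^ j % D ≠ 0 := by
  have hv0 : v ≠ 0 := by omega
  set j := Nat.log D v with hj
  have hj1 : 1 ≤ j := by
    rw [hj, Nat.le_log_iff_pow_le (by omega) hv0]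
    simpa using hv1
  have hjm : j < m := Nat.log_lt_of_lt_pow hv0 hv2
  have hlow : D ^ j ≤ v := Nat.pow_log_le_self D hv0
  have hhigh : v < D ^ (j + 1) := Nat.lt_pow_succ_log_self (by omega) v
  have h1 : 1 ≤ v / D ^ j := (Nat.one_le_div_iff (by positivity)).mpr hlow
  have h2 : v / D ^ j < D := by
    rw [Nat.div_lt_iff_lt_mul (by positivity)]
    calc v < D ^ (j+1) := hhigh
      _ = D * D ^ j := by ring
  refine ⟨j, hj1, hjm, ?_⟩
  rw [Nat.mod_eq_of_lt h2]
  omega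

lemma replicate_not_prefix_wordM {D m : ℕ} (hD : 2 ≤ D) (hm : 2 ≤ m)
    (v : Fin (D ^ m)) (hv : D ≤ (v : ℕ)) :
    ¬ (List.replicate (m - 1) (⟨0, by omega⟩ : Fin D) <+: wordM D m v) := by
  intro hpre
  obtain ⟨j, hj1, hjm, hnz⟩ := exists_digit D m hD (v : ℕ) hv v.2
  have hk : m - 1 - j < (List.replicate (m - 1) (⟨0, by omega⟩ : Fin D)).length := by
    simp; omega
  have hg := hpre.getElem hk
  rw [List.getElem_replicate] at hg
  have hval : ((wordM D m v)[m - 1 - j]'(by rw [wordM_length]; omega) : Fin D).val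
      = (v : ℕ) / D ^ (m - (m - 1 - j + 1)) % D := wordM_getElem v _ (by omega)
  have hexp : m - (m - 1 - j + 1) = j := by omega
  rw [hexp] at hval
  apply hnz
  rw [← hval, ← hg]

/-- digit 0 of the top word is `D - 1`. -/
lemma wordM_top_getElem0 {D m : ℕ} (hD : 2 ≤ D) (hm : 1 ≤ m)
    (htop : D ^ m - 1 < D ^ m) :
    ((wordM D m ⟨D ^ m - 1, htop⟩)[0]'(by rw [wordM_length]; omega) : Fin D).val = D - 1 := by
  rw [wordM_getElem _ _ (by omega)]
  have he : m - (0 + 1) = m - 1 := by omega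
  rw [he]
  have hpow : D ^ m = D * D ^ (m - 1) := by
    rw [← pow_succ']
    congr 1
    omega
  have hdiv : (D ^ m - 1) / D ^ (m - 1) = D - 1 := by
    apply Nat.div_eq_of_lt_le
    · have h1 : 1 ≤ D ^ (m-1) := Nat.one_le_pow _ _ (by omega)
      calc (D - 1) * D ^ (m-1) = D * D ^ (m-1) - 1 * D ^ (m-1) := by
            rw [← Nat.sub_mul]
        _ ≤ D ^ m - 1 := by rw [← hpow]; omega
    · have h2 : D - 1 + 1 = D := by omega
      rw [h2, ← hpow]
      omega
  rw [hdiv, Nat.mod_eq_of_lt (by omega)]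

/-- The fixed-length code. -/
lemma codeFix_isPrefixCode (D m : ℕ) : IsPrefixCode (wordM D m) := by
  have h2 : ∀ i j : Fin (D ^ m), i ≠ j → ¬ (wordM D m i <+: wordM D m j) := by
    intro i j hij hpre
    have := hpre.eq_of_length (by rw [wordM_length, wordM_length])
    exact hij (wordM_inj this)
  refine ⟨?_, h2⟩
  intro i j h
  by_contra hne
  exact h2 i j hne (h ▸ List.prefix_rfl)

lemma expLen_codeFix (D m : ℕ) (P : Fin (D ^ m) → ℝ) :
    expLen P (wordM D m) = (∑ i, P i) * m := by
  rw [expLen, Finset.sum_mul]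
  apply Finset.sum_congr rfl
  intro i _
  rw [wordM_length]

section CodeB
variable (D m : ℕ)

def codeB (hD : 2 ≤ D) (hm : 2 ≤ m) : Fin (D ^ m) → List (Fin D) := fun i =>
  if (i : ℕ) = 0 then List.replicate (m - 1) (⟨0, by omega⟩ : Fin D)
  else if h : (i : ℕ) < D ^ m - D then
    wordM D m ⟨(i : ℕ) + D - 1,
      by have := Nat.le_self_pow (show m ≠ 0 by omega) D; omega⟩
  else
    wordM D m ⟨D ^ m - 1,
      by have := Nat.le_self_pow (show m ≠ 0 by omega) D; omega⟩
      ++ [⟨(i : ℕ) - (D ^ m - D), by have := i.2; omega⟩]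

lemma hDlt (hD2 : 2 ≤ D) (hm2 : 2 ≤ m) : D < D ^ m := by
  calc D = D ^ 1 := (pow_one D).symm
    _ < D ^ m := Nat.pow_lt_pow_right (by omega) (by omega)

variable (hD : 2 ≤ D) (hm : 2 ≤ m)

lemma codeB_length (i : Fin (D ^ m)) :
    ((codeB D m hD hm i).length : ℝ) =
      (m : ℝ) + ((if D ^ m - D ≤ (i:ℕ) then (1:ℝ) else 0) - (if (i:ℕ) = 0 then 1 else 0)) := by
  have hDn : D < D ^ m := hDlt D m hD hm
  simp only [codeB]
  rcases Nat.eq_zero_or_pos (i : ℕ) with h0 | hp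
  · rw [if_pos h0, if_neg (by omega : ¬ (D ^ m - D ≤ (i:ℕ))), if_pos h0]
    rw [List.length_replicate, Nat.cast_sub (by omega)]
    push_cast
    ring
  · rw [if_neg (by omega : ¬ ((i:ℕ) = 0)), if_neg (by omega : ¬ ((i:ℕ) = 0))]
    by_cases h : (i : ℕ) < D ^ m - D
    · rw [dif_pos h, if_neg (by omega)]
      rw [wordM_length]
      ring
    · rw [dif_neg h, if_pos (by omega)]
      rw [List.length_append, wordM_length, List.length_singleton]
      push_cast
      ring

lemma codeB_isPrefixCode : IsPrefixCode (codeB D m hD hm) := by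
  have hDn : D < D ^ m := hDlt D m hD hm
  have h2 : ∀ i j : Fin (D ^ m), i ≠ j → ¬ (codeB D m hD hm i <+: codeB D m hD hm j) := by
    intro i j hij hpre
    have hijv : (i : ℕ) ≠ (j : ℕ) := fun h => hij (Fin.ext h)
    simp only [codeB] at hpre
    rcases Nat.eq_zero_or_pos (i : ℕ) with hi0 | hip
    · rw [if_pos hi0] at hpre
      rcases Nat.eq_zero_or_pos (j : ℕ) with hj0 | hjp
      · omega
      · rw [if_neg (by omega)] at hpre
        by_cases hjt : (j : ℕ) < D ^ m - D
        · rw [dif_pos hjt] at hpre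
          exact replicate_not_prefix_wordM hD hm _ (by simp; omega) hpre
        · rw [dif_neg hjt] at hpre
          -- 0-word is a prefix of extended top word: contradiction at digit 0
          have hlen0 : 0 < (List.replicate (m-1) (⟨0, by omega⟩ : Fin D)).length := by
            simp; omega
          have hg := hpre.getElem hlen0
          rw [List.getElem_replicate] at hg
          have hlt : 0 < (wordM D m ⟨D ^ m - 1, by omega⟩).length := by
            rw [wordM_length]; omega
          rw [List.getElem_append_left hlt] at hg
          have := wordM_top_getElem0 (m := m) hD (by omega) (by omega)
          rw [← hg] at this
          simp at this
          omega
    · rw [if_neg (by omega)] at hpre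
      by_cases hit : (i : ℕ) < D ^ m - D
      · rw [dif_pos hit] at hpre
        rcases Nat.eq_zero_or_pos (j : ℕ) with hj0 | hjp
        · rw [if_pos hj0] at hpre
          have := hpre.length_le
          rw [wordM_length, List.length_replicate] at this
          omega
        · rw [if_neg (by omega)] at hpre
          by_cases hjt : (j : ℕ) < D ^ m - D
          · rw [dif_pos hjt] at hpre
            have := wordM_inj (hpre.eq_of_length (by rw [wordM_length, wordM_length]))
            rw [Fin.mk.injEq] at this
            omega
          · rw [dif_neg hjt] at hpre
            have htake := List.prefix_iff_eq_take.mp hpre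
            rw [wordM_length] at htake
            rw [List.take_left' (wordM_length _)] at htake
            have := wordM_inj htake
            rw [Fin.mk.injEq] at this
            omega
      · rw [dif_neg hit] at hpre
        have hilen : (wordM D m ⟨D ^ m - 1, by omega⟩ ++
            [(⟨(i : ℕ) - (D ^ m - D), by have := i.2; omega⟩ : Fin D)]).length = m + 1 := by
          rw [List.length_append, wordM_length]; rfl
        rcases Nat.eq_zero_or_pos (j : ℕ) with hj0 | hjp
        · rw [if_pos hj0] at hpre
          have := hpre.length_le
          rw [hilen, List.length_replicate] at this
          omega
        · rw [if_neg (by omega)] at hpre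
          by_cases hjt : (j : ℕ) < D ^ m - D
          · rw [dif_pos hjt] at hpre
            have := hpre.length_le
            rw [hilen, wordM_length] at this
            omega
          · rw [dif_neg hjt] at hpre
            have heq := hpre.eq_of_length (by rw [hilen, List.length_append, wordM_length]; rfl)
            have := List.append_inj_right heq rfl
            simp only [List.cons.injEq, and_true, Fin.mk.injEq] at this
            omega
  refine ⟨?_, h2⟩
  intro i j h
  by_contra hne
  exact h2 i j hne (h ▸ List.prefix_rfl)

lemma expLen_codeB (P : Fin (D ^ m) → ℝ) (hn : 0 < D ^ m) :
    expLen P (codeB D m hD hm) =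
      (∑ i, P i) * m +
        ((∑ i ∈ Finset.univ.filter (fun i : Fin (D ^ m) => D ^ m - D ≤ (i:ℕ)), P i)
          - P ⟨0, hn⟩) := by
  rw [expLen]
  have hpt : ∀ i : Fin (D ^ m), P i * ((codeB D m hD hm i).length : ℝ) =
      P i * m + ((if D ^ m - D ≤ (i:ℕ) then P i else 0) - (if i = (⟨0, hn⟩ : Fin (D ^ m)) then P i else 0)) := by
    intro i
    rw [codeB_length D m hD hm i]
    have : (if i = (⟨0, hn⟩ : Fin (D ^ m)) then P i else 0)
        = (if (i:ℕ) = 0 then P i else 0) := by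
      congr 1
      simp [Fin.ext_iff]
    rw [this, mul_add, mul_sub, mul_ite, mul_one, mul_zero, mul_ite, mul_one, mul_zero]
  rw [Finset.sum_congr rfl (fun i _ => hpt i)]
  rw [Finset.sum_add_distrib, Finset.sum_sub_distrib]
  rw [← Finset.sum_filter, Finset.sum_ite_eq' Finset.univ _ P]
  simp [Finset.sum_mul]
end CodeB


lemma expLen_ge (D m : ℕ) (hD : 2 ≤ D) (hm : 1 ≤ m) (P : Fin (D ^ m) → ℝ)
    (hpos : ∀ i, 0 < P i) (hsum : ∑ i, P i = 1) (hsorted : Antitone P)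
    (hcond : P ⟨0, pow_pos (Nat.lt_of_lt_of_le (by decide : 0 < 2) hD) m⟩ ≤
      ∑ i ∈ Finset.univ.filter (fun i : Fin (D ^ m) => D ^ m - D ≤ (i : ℕ)), P i)
    (c : Fin (D ^ m) → List (Fin D)) (hc : IsPrefixCode c) :
    (m : ℝ) ≤ expLen P c := by
  classical
  set l : Fin (D ^ m) → ℕ := fun i => (c i).length with hl
  set L : ℕ := Finset.univ.sup l with hLdef
  have hLl : ∀ i, l i ≤ L := fun i => Finset.le_sup (Finset.mem_univ i)
  have hk := kraft_nat c hc L hLl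
  have hD0 : (0:ℝ) < D := by positivity
  have key1 : ∀ i : Fin (D ^ m), (D:ℝ) ^ ((m:ℤ) - (l i : ℤ)) =
      ((D:ℝ) ^ (L - l i : ℕ)) * (D:ℝ) ^ ((m:ℤ) - (L:ℤ)) := by
    intro i
    rw [← zpow_natCast (D:ℝ) (L - l i), ← zpow_add₀ (ne_of_gt hD0)]
    congr 1
    have := hLl i
    push_cast [Nat.cast_sub this]
    ring
  have hkr : ∑ i, (D:ℝ) ^ ((m:ℤ) - (l i : ℤ)) ≤ (D:ℝ) ^ (m:ℤ) := by
    have hnat : ((∑ i, D ^ (L - l i) : ℕ) : ℝ) ≤ ((D ^ L : ℕ) : ℝ) := by exact_mod_cast hk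
    push_cast at hnat
    calc ∑ i, (D:ℝ) ^ ((m:ℤ) - (l i:ℤ))
        = (∑ i, (D:ℝ) ^ (L - l i : ℕ)) * (D:ℝ) ^ ((m:ℤ) - (L:ℤ)) := by
          rw [Finset.sum_mul]; exact Finset.sum_congr rfl (fun i _ => key1 i)
      _ ≤ (D:ℝ) ^ (L:ℕ) * (D:ℝ) ^ ((m:ℤ) - (L:ℤ)) :=
          mul_le_mul_of_nonneg_right hnat (le_of_lt (zpow_pos hD0 _))
      _ = (D:ℝ) ^ (m:ℤ) := by
          rw [← zpow_natCast (D:ℝ) L, ← zpow_add₀ (ne_of_gt hD0)]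
          congr 1; ring
  set cz : Fin (D ^ m) → ℤ := fun i => (m:ℤ) - l i with hcz
  set σ : Equiv.Perm (Fin (D ^ m)) := Tuple.sort (fun i => - cz i) with hσ
  set c'' : Fin (D ^ m) → ℤ := fun i => cz (σ i) with hc''
  have hanti'' : Antitone c'' := by
    intro a b hab
    have h := Tuple.monotone_sort (fun i => - cz i) hab
    simp only [Function.comp_apply] at h
    have h2 : - cz (σ a) ≤ - cz (σ b) := by rw [hσ]; exact h
    simp only [hc'']
    omega
  have hkraft'' : ∑ i, (D:ℝ) ^ (c'' i) ≤ (D:ℝ) ^ (m:ℤ) := by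
    rw [hc'']
    rw [Equiv.sum_comp σ (fun i => (D:ℝ) ^ (cz i))]
    exact hkr
  have h0 : ∑ i, P i * (c'' i : ℝ) ≤ 0 :=
    key_lemma D m hD hm P hpos hsorted hcond (∑ i, (c'' i).toNat) c'' hanti'' rfl hkraft''
  have hrearr : ∑ i, P i * (cz i : ℝ) ≤ ∑ i, P i * (c'' i : ℝ) := by
    have hmono : Monovary P (fun i => (c'' i : ℝ)) := by
      apply Antitone.monovary hsorted
      intro a b hab
      dsimp only
      exact_mod_cast hanti'' hab
    have := hmono.sum_smul_comp_perm_le_sum_smul (σ := σ⁻¹)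
    simp only [smul_eq_mul] at this
    calc ∑ i, P i * (cz i : ℝ) = ∑ i, P i * ((c'' (σ⁻¹ i) : ℝ)) := by
          apply Finset.sum_congr rfl
          intro i _
          simp [hc'']
      _ ≤ ∑ i, P i * (c'' i : ℝ) := this
  have hexp : expLen P c = (m : ℝ) - ∑ i, P i * (cz i : ℝ) := by
    have hpt : ∀ i : Fin (D ^ m), P i * ((c i).length : ℝ) =
        P i * m - P i * (cz i : ℝ) := by
      intro i
      have hz : ((cz i : ℝ)) = (m : ℝ) - (l i : ℝ) := by
        rw [hcz]; push_cast; ring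
      rw [hz, hl]
      push_cast
      ring
    rw [expLen, Finset.sum_congr rfl (fun i _ => hpt i), Finset.sum_sub_distrib]
    have hmm : ∑ i : Fin (D ^ m), P i * (m:ℝ) = (m:ℝ) := by
      rw [← Finset.sum_mul, hsum, one_mul]
    rw [hmm]
  rw [hexp]
  linarith

lemma minExpLen_eq_m (D m : ℕ) (hD : 2 ≤ D) (hm : 1 ≤ m) (P : Fin (D ^ m) → ℝ)
    (hP : IsPMF P) (hsorted : Antitone P)
    (hcond : P ⟨0, pow_pos (Nat.lt_of_lt_of_le (by decide : 0 < 2) hD) m⟩ ≤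
      ∑ i ∈ Finset.univ.filter (fun i : Fin (D ^ m) => D ^ m - D ≤ (i : ℕ)), P i) :
    minExpLen D P = (m : ℝ) := by
  obtain ⟨hpos, hsum⟩ := hP
  have hmem : (m : ℝ) ∈ {x : ℝ | ∃ c : Fin (D ^ m) → List (Fin D), IsPrefixCode c ∧ x = expLen P c} := by
    refine ⟨wordM D m, codeFix_isPrefixCode D m, ?_⟩
    rw [expLen_codeFix, hsum, one_mul]
  have hlb : ∀ x ∈ {x : ℝ | ∃ c : Fin (D ^ m) → List (Fin D), IsPrefixCode c ∧ x = expLen P c},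
      (m : ℝ) ≤ x := by
    rintro x ⟨c, hc, rfl⟩
    exact expLen_ge D m hD hm P hpos hsum hsorted hcond c hc
  rw [minExpLen]
  exact le_antisymm (csInf_le ⟨(m:ℝ), hlb⟩ hmem) (le_csInf ⟨(m:ℝ), hmem⟩ hlb)

/-- For n = D^m, a nonincreasing PMF P has L_D(P) = L_D(U_n) iff the
sum of its lowest D probabilities is ≥ its highest probability. -/
theorem stmt_0 (D m : ℕ) (hD : 2 ≤ D) (hm : 1 ≤ m)
    (P : Fin (D ^ m) → ℝ) (hP : IsPMF P)
    (hsorted : ∀ i j : Fin (D ^ m), i ≤ j → P j ≤ P i) :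
    minExpLen D P = minExpLen D (unif (D ^ m)) ↔
      P ⟨0, pow_pos (by omega) m⟩ ≤
        ∑ i ∈ Finset.univ.filter (fun i : Fin (D ^ m) => D ^ m - D ≤ (i : ℕ)), P i := by
  classical
  have hn : 0 < D ^ m := pow_pos (by omega) m
  have hanti : Antitone P := fun i j h => hsorted i j h
  obtain ⟨hpos, hsum⟩ := hP
  have hnR : (0:ℝ) < ((D ^ m : ℕ) : ℝ) := by exact_mod_cast hn
  -- uniform is a sorted PMF satisfying the condition
  have hupos : ∀ i : Fin (D ^ m), 0 < unif (D ^ m) i := by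
    intro i; simp only [unif]; positivity
  have husum : ∑ i : Fin (D ^ m), unif (D ^ m) i = 1 := by
    simp only [unif]
    rw [Finset.sum_const, Finset.card_univ, Fintype.card_fin, nsmul_eq_mul]
    field_simp
  have huanti : Antitone (unif (D ^ m)) := fun i j _ => le_refl _
  have hucond : unif (D ^ m) ⟨0, pow_pos (by omega) m⟩ ≤
      ∑ i ∈ Finset.univ.filter (fun i : Fin (D ^ m) => D ^ m - D ≤ (i : ℕ)), unif (D ^ m) i := by
    simp only [unif]
    rw [Finset.sum_const, card_filter_ge (D ^ m) (D ^ m - D), nsmul_eq_mul]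
    have hcd : D ^ m - (D ^ m - D) = D := by
      have : D ≤ D ^ m := Nat.le_self_pow (by omega) D
      omega
    rw [hcd]
    have h1 : (1:ℝ) ≤ (D:ℝ) := by exact_mod_cast (by omega : 1 ≤ D)
    nlinarith [one_div_pos.mpr hnR]
  have hunif : minExpLen D (unif (D ^ m)) = (m : ℝ) :=
    minExpLen_eq_m D m hD hm _ ⟨hupos, husum⟩ huanti hucond
  constructor
  · intro heq
    by_contra hcond
    push_neg at hcond
    -- then m ≥ 2
    have hm2 : 2 ≤ m := by
      by_contra hm1
      have hmeq : m = 1 := by omega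
      subst hmeq
      have hfil : Finset.univ.filter (fun i : Fin (D ^ 1) => D ^ 1 - D ≤ (i : ℕ)) = Finset.univ := by
        apply Finset.filter_true_of_mem
        intro i _
        simp
      rw [hfil] at hcond
      have : P ⟨0, pow_pos (by omega) 1⟩ ≤ ∑ i, P i :=
        Finset.single_le_sum (fun i _ => (hpos i).le) (Finset.mem_univ _)
      linarith
    -- the better code
    have hexp : expLen P (codeB D m hD hm2) =
        (m : ℝ) + ((∑ i ∈ Finset.univ.filter (fun i : Fin (D ^ m) => D ^ m - D ≤ (i:ℕ)), P i)
          - P ⟨0, hn⟩) := by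
      rw [expLen_codeB D m hD hm2 P hn, hsum, one_mul]
    have hlt : expLen P (codeB D m hD hm2) < (m : ℝ) := by
      rw [hexp]
      have : P ⟨0, hn⟩ = P ⟨0, pow_pos (by omega) m⟩ := rfl
      linarith [hcond]
    have hbdd : BddBelow {x : ℝ | ∃ c : Fin (D ^ m) → List (Fin D), IsPrefixCode c ∧ x = expLen P c} := by
      refine ⟨0, ?_⟩
      rintro x ⟨c, hc, rfl⟩
      rw [expLen]
      apply Finset.sum_nonneg
      intro i _
      exact mul_nonneg (hpos i).le (by positivity)
    have hle : minExpLen D P ≤ expLen P (codeB D m hD hm2) :=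
      csInf_le hbdd ⟨codeB D m hD hm2, codeB_isPrefixCode D m hD hm2, rfl⟩
    rw [heq, hunif] at hle
    linarith
  · intro hcond
    rw [hunif, minExpLen_eq_m D m hD hm P ⟨hpos, hsum⟩ hanti hcond]
end

section
/- Let D ≥ 2 and n ≥ 2. For every PMF P on n symbols, the minimum expected length of P is at most that of the uniform distribution: L_D(P) ≤ L_D(U_n). That is, the minimum expected length function attains its maximum value at the uniform distribution. -/
/-!
Relabelling the symbols of a prefix code gives a prefix code. Averaging the expected length
under `P` over the `n` cyclic relabellings `i ↦ c (i + k)` of a code `c` gives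
`(∑ i, P i) * (∑ i, |c i|) / n = ∑ i, |c i| / n`, the expected length of `c` under the uniform
distribution, so some relabelling of `c` does at least as well for `P`.
-/

lemma exists_add_right_sum_mul_le {G : Type*} [AddGroup G] [Fintype G] [Nonempty G]
    (w f : G → ℝ) :
    ∃ k, ∑ i, w i * f (i + k) ≤ (∑ i, w i) * (∑ i, f i) / Fintype.card G := by
  have hcard : (0 : ℝ) < Fintype.card G := by exact_mod_cast Fintype.card_pos
  have hshift (i : G) : ∑ k, f (i + k) = ∑ j, f j := Equiv.sum_comp (Equiv.addLeft i) f
  have htotal : ∑ k, ∑ i, w i * f (i + k) =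
      ∑ _k : G, (∑ i, w i) * (∑ i, f i) / Fintype.card G := by
    rw [Finset.sum_comm, Finset.sum_const, Finset.card_univ, nsmul_eq_mul,
      mul_div_cancel₀ _ hcard.ne', Finset.sum_mul]
    simp only [← Finset.mul_sum, hshift]
  obtain ⟨k, -, hk⟩ := Finset.exists_le_of_sum_le Finset.univ_nonempty htotal.le
  exact ⟨k, hk⟩

lemma IsPrefixCode.comp_equiv {D n : ℕ} {c : Fin n → List (Fin D)} (hc : IsPrefixCode c)
    (e : Fin n ≃ Fin n) : IsPrefixCode (c ∘ e) :=
  ⟨hc.1.comp e.injective, fun i j hij => hc.2 (e i) (e j) (e.injective.ne hij)⟩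

lemma expLen_unif {D n : ℕ} (c : Fin n → List (Fin D)) :
    expLen (unif n) c = (∑ i, ((c i).length : ℝ)) / n := by
  simp only [expLen, unif, one_div_mul_eq_div, Finset.sum_div]

lemma minExpLen_le_expLen {D n : ℕ} {P : Fin n → ℝ} (hP : ∀ i, 0 ≤ P i)
    {c : Fin n → List (Fin D)} (hc : IsPrefixCode c) : minExpLen D P ≤ expLen P c :=
  csInf_le ⟨0, by
    rintro _ ⟨c, -, rfl⟩
    exact Finset.sum_nonneg fun i _ => mul_nonneg (hP i) (Nat.cast_nonneg _)⟩ ⟨c, hc, rfl⟩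

lemma le_minExpLen {D n : ℕ} {P : Fin n → ℝ} {b : ℝ} {c₀ : Fin n → List (Fin D)}
    (hc₀ : IsPrefixCode c₀)
    (h : ∀ c : Fin n → List (Fin D), IsPrefixCode c → b ≤ expLen P c) :
    b ≤ minExpLen D P :=
  le_csInf ⟨_, c₀, hc₀, rfl⟩ <| by rintro _ ⟨c, hc, rfl⟩; exact h c hc

theorem stmt_2_general (D n : ℕ)
    (P : Fin n → ℝ) (hP : IsPMF P) :
    minExpLen D P ≤ minExpLen D (unif n) := by
  have : NeZero n := ⟨by rintro rfl; simp [IsPMF] at hP⟩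
  by_cases hcode : ∃ c : Fin n → List (Fin D), IsPrefixCode c
  · obtain ⟨c₀, hc₀⟩ := hcode
    refine le_minExpLen hc₀ fun c hc => ?_
    obtain ⟨k, hk⟩ := exists_add_right_sum_mul_le P fun i => ((c i).length : ℝ)
    calc minExpLen D P ≤ expLen P (c ∘ Equiv.addRight k) :=
          minExpLen_le_expLen (fun i => (hP.1 i).le) (hc.comp_equiv _)
      _ ≤ expLen (unif n) c := by
          rw [expLen_unif]
          simpa [expLen, hP.2] using hk
  -- Without prefix codes both sides are the junk value `sInf ∅ = 0`.
  · simp only [not_exists] at hcode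
    simp [minExpLen, hcode]

/-- The minimum expected length function attains its maximum at the
uniform distribution. -/
theorem stmt_2 (D n : ℕ) (hD : 2 ≤ D) (hn : 2 ≤ n)
    (P : Fin n → ℝ) (hP : IsPMF P) :
    minExpLen D P ≤ minExpLen D (unif n) :=
  stmt_2_general D n P hP
end

section
/- Let D ≥ 2 and n ≥ 2, and let m be the unique natural number with D^m ≤ n < D^{m+1}. Let k = D^m − ⌈(n − D^m)/(D − 1)⌉, where the ceiling is taken over the rationals. Then the minimum expected length of the uniform distribution on n symbols is L_D(U_n) = m + (n − k)/n. (When n = D^m this gives L_D(U_n) = m.) -/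
namespace Stmt7

def wd (D : ℕ) (hD : 0 < D) (len v : ℕ) : List (Fin D) :=
  List.ofFn fun j : Fin len => ⟨v / D ^ (len - 1 - (j : ℕ)) % D, Nat.mod_lt _ hD⟩

lemma wd_length {D : ℕ} (hD : 0 < D) (len v : ℕ) : (wd D hD len v).length = len := by
  simp [wd]

lemma wd_take {D : ℕ} (hD : 0 < D) (len w : ℕ) :
    (wd D hD (len + 1) w).take len = wd D hD len (w / D) := by
  apply List.ext_getElem
  · simp [wd]
  · intro j h1 h2
    simp only [wd, List.getElem_take, List.getElem_ofFn]
    simp only [wd, List.length_take, List.length_ofFn] at h1 h2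
    have hj : j < len := by omega
    congr 1
    rw [Nat.div_div_eq_div_mul]
    congr 2
    rw [← pow_succ']
    congr 1
    omega

lemma dig_mod {D : ℕ} {e len v : ℕ} (he : e < len) :
    (v % D ^ len) / D ^ e % D = v / D ^ e % D := by
  rw [← Nat.mod_mul_right_div_self, ← Nat.mod_mul_right_div_self,
    Nat.mod_mod_of_dvd _ (by rw [← pow_succ]; exact pow_dvd_pow D (by omega))]

lemma wd_inj {D : ℕ} (hD : 0 < D) {len v w : ℕ} (hv : v < D ^ len) (hw : w < D ^ len)
    (h : wd D hD len v = wd D hD len w) : v = w := by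
  induction len generalizing v w with
  | zero => simp at hv hw; omega
  | succ len ih =>
    have hfun := List.ofFn_injective h
    have h0 := congrFun hfun ⟨0, Nat.succ_pos _⟩
    simp only [Fin.mk.injEq, Fin.val_zero] at h0
    have e0 : len + 1 - 1 - 0 = len := by omega
    rw [e0] at h0
    have hvd : v / D ^ len < D := Nat.div_lt_of_lt_mul (by rwa [pow_succ] at hv)
    have hwd : w / D ^ len < D := Nat.div_lt_of_lt_mul (by rwa [pow_succ] at hw)
    rw [Nat.mod_eq_of_lt hvd, Nat.mod_eq_of_lt hwd] at h0
    have hrest : wd D hD len (v % D ^ len) = wd D hD len (w % D ^ len) := by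
      unfold wd
      congr 1
      funext j
      have hj : (j : ℕ) < len := j.2
      ext
      show (v % D ^ len) / D ^ (len - 1 - (j : ℕ)) % D
          = (w % D ^ len) / D ^ (len - 1 - (j : ℕ)) % D
      rw [dig_mod (by omega), dig_mod (by omega)]
      have hjj := congrFun hfun ⟨(j : ℕ) + 1, by omega⟩
      simp only [Fin.mk.injEq] at hjj
      have e1 : len + 1 - 1 - ((j : ℕ) + 1) = len - 1 - (j : ℕ) := by omega
      rwa [e1] at hjj
    have hmod := ih (Nat.mod_lt _ (pow_pos hD len)) (Nat.mod_lt _ (pow_pos hD len)) hrest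
    have hv2 := (Nat.div_add_mod v (D ^ len)).symm
    have hw2 := (Nat.div_add_mod w (D ^ len)).symm
    rw [hv2, hw2, h0, hmod]

lemma kraft {D n : ℕ} {c : Fin n → List (Fin D)} (hc : IsPrefixCode c) (L : ℕ)
    (hL : ∀ i, (c i).length ≤ L) :
    ∑ i, D ^ (L - (c i).length) ≤ D ^ L := by
  classical
  let F : (Σ i : Fin n, List.Vector (Fin D) (L - (c i).length)) →
      List.Vector (Fin D) L := fun p =>
    ⟨c p.1 ++ p.2.toList, by
      rw [List.length_append, List.Vector.toList_length]
      have := hL p.1; omega⟩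
  have key := Fintype.card_le_of_injective F ?_
  · simpa [Fintype.card_sigma, card_vector] using key
  · rintro ⟨i, v⟩ ⟨j, w⟩ hpq
    have hl : c i ++ v.toList = c j ++ w.toList := congrArg Subtype.val hpq
    have hij : i = j := by
      by_contra hne
      have h1 : c i <+: c j ++ w.toList := ⟨v.toList, hl⟩
      have h2 : c j <+: c j ++ w.toList := ⟨w.toList, rfl⟩
      rcases List.prefix_or_prefix_of_prefix h1 h2 with h | h
      · exact hc.2 i j hne h
      · exact hc.2 j i (Ne.symm hne) h
    subst hij
    have hv : v.toList = w.toList := List.append_cancel_left hl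
    simp [List.Vector.toList_injective hv]

lemma zpow_lb {D : ℕ} (hD : 2 ≤ D) (t : ℤ) : 1 + ((D : ℚ) - 1) * t ≤ (D : ℚ) ^ t := by
  have hD1 : (1 : ℚ) ≤ (D : ℚ) := by exact_mod_cast Nat.one_le_of_lt hD
  rcases le_or_gt 0 t with ht | ht
  · obtain ⟨s, rfl⟩ := Int.eq_ofNat_of_zero_le ht
    rw [zpow_natCast]
    have := one_add_mul_le_pow (a := (D : ℚ) - 1) (by linarith) s
    calc 1 + ((D : ℚ) - 1) * s = 1 + (s : ℚ) * ((D : ℚ) - 1) := by ring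
      _ ≤ (1 + ((D : ℚ) - 1)) ^ s := this
      _ = (D : ℚ) ^ s := by ring_nf
  · have h1 : 1 + ((D : ℚ) - 1) * t ≤ 0 := by
      have ht0 : t ≤ -1 := by omega
      have ht1 : (t : ℚ) ≤ -1 := by exact_mod_cast ht0
      have hD2 : (2 : ℚ) ≤ (D : ℚ) := by exact_mod_cast hD
      nlinarith
    have h2 : (0 : ℚ) < (D : ℚ) ^ t := zpow_pos (by linarith) t
    linarith

end Stmt7

open Stmt7

/-- With D^m ≤ n < D^(m+1) and k = D^m − ⌈(n − D^m)/(D − 1)⌉, we have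
L_D(U_n) = m + (n − k)/n. -/
theorem stmt_7 (D n m : ℕ) (hD : 2 ≤ D) (hn : 2 ≤ n)
    (hm : D ^ m ≤ n) (hm' : n < D ^ (m + 1))
    (k : ℕ) (hk : k = D ^ m - (⌈((n - D ^ m : ℕ) : ℚ) / ((D : ℚ) - 1)⌉).toNat) :
    minExpLen D (unif n) = m + ((n : ℝ) - k) / n := by
  classical
  have hD0 : 0 < D := by omega
  set t0 : ℤ := ⌈((n - D ^ m : ℕ) : ℚ) / ((D : ℚ) - 1)⌉ with ht0def
  have hDq2 : (2 : ℚ) ≤ (D : ℚ) := by exact_mod_cast hD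
  have hDq : (0 : ℚ) < (D : ℚ) - 1 := by linarith
  have hcast : ((n - D ^ m : ℕ) : ℚ) = (n : ℚ) - (D : ℚ) ^ m := by
    rw [Nat.cast_sub hm]; push_cast; ring
  have hmq : ((D : ℚ)) ^ m ≤ (n : ℚ) := by exact_mod_cast hm
  have hm'q : (n : ℚ) < (D : ℚ) ^ m * (D : ℚ) := by
    have : (n : ℚ) < ((D : ℚ)) ^ (m + 1) := by exact_mod_cast hm'
    rwa [pow_succ] at this
  have ht0nn : 0 ≤ t0 := Int.ceil_nonneg (div_nonneg (Nat.cast_nonneg _) hDq.le)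
  have ht0le : t0 ≤ (D ^ m : ℕ) := by
    apply Int.ceil_le.mpr
    rw [hcast, div_le_iff₀ hDq]
    push_cast
    nlinarith
  have htn : t0.toNat ≤ D ^ m := by
    have := Int.toNat_le.mpr ht0le
    exact_mod_cast this
  have hkt : k + t0.toNat = D ^ m := by omega
  have hkZ : (k : ℤ) = (D ^ m : ℕ) - t0 := by
    rw [hk]
    omega
  have hkn : k ≤ n := by
    have : k ≤ D ^ m := by omega
    omega
  -- ceil lower bound : n ≤ D^m + t0 (D-1)
  have hceil : (n : ℚ) ≤ (D : ℚ) ^ m + (t0 : ℚ) * ((D : ℚ) - 1) := by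
    have h1 : ((n - D ^ m : ℕ) : ℚ) / ((D : ℚ) - 1) ≤ (t0 : ℚ) := Int.le_ceil _
    rw [hcast, div_le_iff₀ hDq] at h1
    linarith
  -- lower bound
  have hnR : (0 : ℝ) < (n : ℝ) := by exact_mod_cast (by omega : 0 < n)
  have hlb : ∀ x ∈ {x : ℝ | ∃ c : Fin n → List (Fin D), IsPrefixCode c ∧ x = expLen (unif n) c},
      (m : ℝ) + ((n : ℝ) - k) / n ≤ x := by
    rintro x ⟨c, hc, rfl⟩
    have hDne : (D : ℚ) ≠ 0 := by positivity
    set L := (Finset.univ.sup fun i : Fin n => (c i).length) + m + 1 with hLdef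
    have hLi : ∀ i, (c i).length ≤ L :=
      fun i => le_trans (Finset.le_sup (f := fun i : Fin n => (c i).length)
        (Finset.mem_univ i)) (by omega)
    have hLm : m + 1 ≤ L := by omega
    have hKn : ∑ i, D ^ (L - (c i).length) ≤ D ^ L := kraft hc L hLi
    have hw : ∀ a : ℕ, a ≤ L → (D : ℚ) ^ ((m : ℤ) + 1 - a)
        = (D : ℚ) ^ (((L - a : ℕ)) : ℤ) * (D : ℚ) ^ ((m : ℤ) + 1 - L) := by
      intro a ha
      rw [← zpow_add₀ hDne]
      congr 1
      rw [Nat.cast_sub ha]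
      ring
    have hQ : ∑ i, (D : ℚ) ^ ((m : ℤ) + 1 - (c i).length) ≤ (D : ℚ) ^ ((m : ℤ) + 1) := by
      have hc2 : (∑ i, (D : ℚ) ^ (((L - (c i).length : ℕ)) : ℤ)) ≤ (D : ℚ) ^ ((L : ℕ) : ℤ) := by
        push_cast [zpow_natCast]
        exact_mod_cast hKn
      calc ∑ i, (D : ℚ) ^ ((m : ℤ) + 1 - (c i).length)
          = ∑ i, (D : ℚ) ^ (((L - (c i).length : ℕ)) : ℤ) * (D : ℚ) ^ ((m : ℤ) + 1 - L) :=
            Finset.sum_congr rfl fun i _ => hw _ (hLi i)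
        _ = (∑ i, (D : ℚ) ^ (((L - (c i).length : ℕ)) : ℤ)) * (D : ℚ) ^ ((m : ℤ) + 1 - L) := by
            rw [Finset.sum_mul]
        _ ≤ (D : ℚ) ^ ((L : ℕ) : ℤ) * (D : ℚ) ^ ((m : ℤ) + 1 - L) := by
            exact mul_le_mul_of_nonneg_right hc2 (zpow_nonneg (by positivity) _)
        _ = (D : ℚ) ^ ((m : ℤ) + 1) := by rw [← zpow_add₀ hDne]; congr 1; ring
    set T : ℤ := ∑ i, ((m : ℤ) + 1 - (c i).length) with hTdef
    have hsum_lb : (n : ℚ) + ((D : ℚ) - 1) * (T : ℚ) ≤ (D : ℚ) ^ ((m : ℤ) + 1) := by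
      have h2 : ∑ i : Fin n, (1 + ((D : ℚ) - 1) * (((m : ℤ) + 1 - (c i).length : ℤ) : ℚ))
          ≤ ∑ i, (D : ℚ) ^ ((m : ℤ) + 1 - (c i).length) :=
        Finset.sum_le_sum fun i _ => zpow_lb hD _
      have h3 : ∑ i : Fin n, (1 + ((D : ℚ) - 1) * (((m : ℤ) + 1 - (c i).length : ℤ) : ℚ))
          = (n : ℚ) + ((D : ℚ) - 1) * (T : ℚ) := by
        rw [Finset.sum_add_distrib, Finset.sum_const, Finset.card_univ, Fintype.card_fin,
          ← Finset.mul_sum, hTdef]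
        push_cast
        ring
      rw [h3] at h2
      exact h2.trans hQ
    have hpowq : (D : ℚ) ^ ((m : ℤ) + 1) = (D : ℚ) ^ m * (D : ℚ) := by
      rw [show ((m : ℤ) + 1) = ((m + 1 : ℕ) : ℤ) by push_cast; ring, zpow_natCast, pow_succ]
    have hTk : T ≤ (k : ℤ) := by
      have hT1 : (T : ℚ) * ((D : ℚ) - 1) ≤ (D : ℚ) ^ m * (D : ℚ) - n := by
        rw [hpowq] at hsum_lb; linarith
      have hceil2 : t0 ≤ (D ^ m : ℕ) - T := by
        apply Int.ceil_le.mpr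
        rw [hcast, div_le_iff₀ hDq]
        push_cast
        nlinarith [hT1]
      omega
    have hsum' : (n : ℤ) * (m + 1) - k ≤ ∑ i, ((c i).length : ℤ) := by
      have hTe : T = (n : ℤ) * (m + 1) - ∑ i, ((c i).length : ℤ) := by
        rw [hTdef, Finset.sum_sub_distrib, Finset.sum_const, Finset.card_univ, Fintype.card_fin]
        push_cast
        ring
      omega
    have hexp : expLen (unif n) c = (∑ i, ((c i).length : ℝ)) / n := by
      unfold expLen unif
      rw [Finset.sum_div]
      exact Finset.sum_congr rfl fun i _ => by rw [one_div, inv_mul_eq_div]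
    have hZR : (n : ℝ) * (m + 1) - k ≤ ∑ i, ((c i).length : ℝ) := by exact_mod_cast hsum'
    rw [hexp, le_div_iff₀ hnR]
    have : ((m : ℝ) + ((n : ℝ) - k) / n) * n = (n : ℝ) * (m + 1) - k := by
      field_simp
      ring
    rw [this]
    exact hZR
  -- the optimal code
  have hn_le : n ≤ k + t0.toNat * D := by
    have htq : (t0.toNat : ℚ) = (t0 : ℚ) := by exact_mod_cast Int.toNat_of_nonneg ht0nn
    have hkq : (k : ℚ) + (t0.toNat : ℚ) = (D : ℚ) ^ m := by exact_mod_cast hkt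
    have h1 : (n : ℚ) ≤ (k : ℚ) + (t0.toNat : ℚ) * D := by
      rw [htq]; nlinarith [hceil, hkq]
    exact_mod_cast h1
  have hpos : ∀ i : Fin n, ¬((i : ℕ) < k) → k * D + ((i : ℕ) - k) < D ^ (m + 1) := by
    intro i hi
    obtain ⟨u, hu⟩ : ∃ u, u = t0.toNat * D := ⟨_, rfl⟩
    have h1 : n ≤ k + u := by rw [hu]; exact hn_le
    have hilt : (i : ℕ) < n := i.2
    calc k * D + ((i : ℕ) - k) < k * D + u := by omega
      _ = (k + t0.toNat) * D := by rw [hu]; ring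
      _ = D ^ m * D := by rw [hkt]
      _ = D ^ (m + 1) := (pow_succ D m).symm
  let c0 : Fin n → List (Fin D) := fun i =>
    if (i : ℕ) < k then wd D hD0 m (i : ℕ) else wd D hD0 (m + 1) (k * D + ((i : ℕ) - k))
  have hkm : k ≤ D ^ m := by omega
  have hlen : ∀ i : Fin n, (c0 i).length = if (i : ℕ) < k then m else m + 1 := by
    intro i; by_cases hi : (i : ℕ) < k <;> simp [c0, hi, wd_length]
  have hdiv_ge : ∀ i : Fin n, ¬((i : ℕ) < k) → k ≤ (k * D + ((i : ℕ) - k)) / D := by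
    intro i hi
    exact (Nat.le_div_iff_mul_le hD0).mpr (Nat.le_add_right _ _)
  have hdiv_lt : ∀ i : Fin n, ¬((i : ℕ) < k) → (k * D + ((i : ℕ) - k)) / D < D ^ m := by
    intro i hi
    apply Nat.div_lt_of_lt_mul
    have := hpos i hi
    rwa [pow_succ'] at this
  have hcode : IsPrefixCode c0 := by
    constructor
    · intro i j hij
      by_cases hi : (i : ℕ) < k <;> by_cases hj : (j : ℕ) < k
      · exact Fin.ext (wd_inj hD0 (lt_of_lt_of_le hi hkm) (lt_of_lt_of_le hj hkm)
          (by simpa [c0, hi, hj] using hij))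
      · exfalso
        have := congrArg List.length hij
        rw [hlen i, hlen j, if_pos hi, if_neg hj] at this
        omega
      · exfalso
        have := congrArg List.length hij
        rw [hlen i, hlen j, if_neg hi, if_pos hj] at this
        omega
      · have hval := wd_inj hD0 (hpos i hi) (hpos j hj) (by simpa [c0, hi, hj] using hij)
        have hik : k ≤ (i : ℕ) := by omega
        have hjk : k ≤ (j : ℕ) := by omega
        exact Fin.ext (by omega)
    · intro i j hne hpre
      have hlenle := hpre.length_le
      by_cases hi : (i : ℕ) < k <;> by_cases hj : (j : ℕ) < k
      · have heq : c0 i = c0 j := hpre.eq_of_length (by rw [hlen i, hlen j, if_pos hi, if_pos hj])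
        exact hne (Fin.ext (wd_inj hD0 (lt_of_lt_of_le hi hkm) (lt_of_lt_of_le hj hkm)
          (by simpa [c0, hi, hj] using heq)))
      · have htake := List.prefix_iff_eq_take.mp hpre
        rw [hlen i, if_pos hi] at htake
        rw [show (c0 j) = wd D hD0 (m + 1) (k * D + ((j : ℕ) - k)) from by simp [c0, hj],
          wd_take] at htake
        have hio : (i : ℕ) = (k * D + ((j : ℕ) - k)) / D :=
          wd_inj hD0 (lt_of_lt_of_le hi hkm) (hdiv_lt j hj) (by simpa [c0, hi] using htake)
        have := hdiv_ge j hj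
        omega
      · rw [hlen i, if_neg hi, hlen j, if_pos hj] at hlenle
        omega
      · have heq : c0 i = c0 j := hpre.eq_of_length (by rw [hlen i, hlen j, if_neg hi, if_neg hj])
        have hval := wd_inj hD0 (hpos i hi) (hpos j hj) (by simpa [c0, hi, hj] using heq)
        have hik : k ≤ (i : ℕ) := by omega
        have hjk : k ≤ (j : ℕ) := by omega
        exact hne (Fin.ext (by omega))
  have hsumIf : ∑ i : Fin n, (if (i : ℕ) < k then (m : ℝ) else (m : ℝ) + 1)
      = (n : ℝ) * m + ((n : ℝ) - k) := by
    rw [Fin.sum_univ_eq_sum_range (fun x => if x < k then (m : ℝ) else (m : ℝ) + 1) n]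
    rw [← Finset.sum_range_add_sum_Ico _ hkn]
    have e1 : ∑ x ∈ Finset.range k, (if x < k then (m : ℝ) else (m : ℝ) + 1) = (k : ℝ) * m := by
      rw [Finset.sum_congr rfl (fun x hx => if_pos (Finset.mem_range.mp hx)),
        Finset.sum_const, Finset.card_range, nsmul_eq_mul]
    have e2 : ∑ x ∈ Finset.Ico k n, (if x < k then (m : ℝ) else (m : ℝ) + 1)
        = ((n - k : ℕ) : ℝ) * ((m : ℝ) + 1) := by
      rw [Finset.sum_congr rfl (fun x hx => if_neg (by
        have := (Finset.mem_Ico.mp hx).1; omega)), Finset.sum_const, Nat.card_Ico, nsmul_eq_mul]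
    rw [e1, e2, Nat.cast_sub hkn]
    ring
  have hexp0 : expLen (unif n) c0 = (m : ℝ) + ((n : ℝ) - k) / n := by
    unfold expLen unif
    have hterm : ∀ i : Fin n, ((c0 i).length : ℝ) = if (i : ℕ) < k then (m : ℝ) else (m : ℝ) + 1 := by
      intro i
      rw [hlen i]
      split <;> push_cast <;> ring
    calc ∑ i : Fin n, 1 / (n : ℝ) * ((c0 i).length : ℝ)
        = ∑ i : Fin n, 1 / (n : ℝ) * (if (i : ℕ) < k then (m : ℝ) else (m : ℝ) + 1) :=
          Finset.sum_congr rfl fun i _ => by rw [hterm i]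
      _ = 1 / (n : ℝ) * ∑ i : Fin n, (if (i : ℕ) < k then (m : ℝ) else (m : ℝ) + 1) := by
          rw [Finset.mul_sum]
      _ = 1 / (n : ℝ) * ((n : ℝ) * m + ((n : ℝ) - k)) := by rw [hsumIf]
      _ = (m : ℝ) + ((n : ℝ) - k) / n := by field_simp
  have hmem : (m : ℝ) + ((n : ℝ) - k) / n
      ∈ {x : ℝ | ∃ c : Fin n → List (Fin D), IsPrefixCode c ∧ x = expLen (unif n) c} :=
    ⟨c0, hcode, hexp0.symm⟩
  exact le_antisymm
    (csInf_le ⟨(m : ℝ) + ((n : ℝ) - k) / n, fun x hx => hlb x hx⟩ hmem)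
    (le_csInf ⟨_, hmem⟩ hlb)
end
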